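/- arXiv:1712.01580 — 9 statements merged into one kernel-verified Lean document; each statement's English description precedes it below -/
import Mathlib

section
/- Let C be a finite set, σ₁,…,σ_k : C → C, and ⋈', ⋈ balanced equivalence relations on C with ⋈' refining ⋈. Then the relation on C/⋈' defined by [c]_{⋈'} ∼ [d]_{⋈'} iff c ⋈ d is a well-defined balanced equivalence relation for the quotient network (C/⋈', (σ_i^{⋈'})), and the quotient of C/⋈' by ∼ is isomorphic (as a network) to the quotient C/⋈. -/
namespace Setoid

variable {α : Type*} {s t : Setoid α} (h : s ≤ t)

theorem map_of_le_mk (a : α) : map_of_le h (Quotient.mk s a) = Quotient.mk t a :=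
  rfl

theorem map_of_le_surjective : Function.Surjective (map_of_le h) :=
  Quotient.ind fun a => ⟨Quotient.mk s a, rfl⟩

theorem map_of_le_mk_eq_map_of_le_mk_iff {a b : α} :
    map_of_le h (Quotient.mk s a) = map_of_le h (Quotient.mk s b) ↔ t a b :=
  Quotient.eq

theorem semiconj_map_of_le {f : α → α} {fs : Quotient s → Quotient s}
    {ft : Quotient t → Quotient t} (hfs : ∀ a, fs (Quotient.mk s a) = Quotient.mk s (f a))
    (hft : ∀ a, ft (Quotient.mk t a) = Quotient.mk t (f a)) :
    Function.Semiconj (map_of_le h) fs ft :=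
  Quotient.ind fun a => by rw [hfs, map_of_le_mk, map_of_le_mk, hft]

end Setoid

theorem stmt_4_general {C : Type*} {k : ℕ} (σ : Fin k → C → C)
    (s s' : Setoid C)
    (href : ∀ c d, s'.r c d → s.r c d)
    (σ' : Fin k → Quotient s' → Quotient s')
    (hσ' : ∀ i c, σ' i (Quotient.mk s' c) = Quotient.mk s' (σ i c))
    (σq : Fin k → Quotient s → Quotient s)
    (hσq : ∀ i c, σq i (Quotient.mk s c) = Quotient.mk s (σ i c)) :
    ∃ R : Quotient s' → Quotient s' → Prop,
      (∀ c d : C, R (Quotient.mk s' c) (Quotient.mk s' d) ↔ s.r c d) ∧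
      Equivalence R ∧
      (∀ i x y, R x y → R (σ' i x) (σ' i y)) ∧
      ∃ φ : Quotient s' → Quotient s,
        Function.Surjective φ ∧ (∀ x y, R x y ↔ φ x = φ y) ∧
        ∀ i x, φ (σ' i x) = σq i (φ x) := by
  have hle : s' ≤ s := fun c d => href c d
  set φ := Setoid.map_of_le hle
  have hφ : ∀ i, Function.Semiconj φ (σ' i) (σq i) := fun i =>
    Setoid.semiconj_map_of_le hle (hσ' i) (hσq i)
  refine ⟨fun x y => φ x = φ y, fun c d => Setoid.map_of_le_mk_eq_map_of_le_mk_iff hle,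
    (Setoid.ker φ).iseqv, ?_, φ, Setoid.map_of_le_surjective hle, fun _ _ => Iff.rfl, hφ⟩
  intro i x y hxy
  rw [(hφ i).eq, (hφ i).eq, hxy]

/-- if the balanced relation `s'` refines the balanced relation `s`,
then `s` induces a well-defined balanced equivalence relation `R` on the
quotient network `C/s'`, and the quotient of `C/s'` by `R` is isomorphic to
`C/s` (expressed via a surjection `φ` whose kernel is `R` and which commutes
with the quotient network maps). -/
theorem stmt_4 {C : Type*} [Fintype C] {k : ℕ} (σ : Fin k → C → C)
    (s s' : Setoid C)
    (hbal : ∀ i c d, s.r c d → s.r (σ i c) (σ i d))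
    (hbal' : ∀ i c d, s'.r c d → s'.r (σ i c) (σ i d))
    (href : ∀ c d, s'.r c d → s.r c d)
    (σ' : Fin k → Quotient s' → Quotient s')
    (hσ' : ∀ i c, σ' i (Quotient.mk s' c) = Quotient.mk s' (σ i c))
    (σq : Fin k → Quotient s → Quotient s)
    (hσq : ∀ i c, σq i (Quotient.mk s c) = Quotient.mk s (σ i c)) :
    ∃ R : Quotient s' → Quotient s' → Prop,
      (∀ c d : C, R (Quotient.mk s' c) (Quotient.mk s' d) ↔ s.r c d) ∧
      Equivalence R ∧
      (∀ i x y, R x y → R (σ' i x) (σ' i y)) ∧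
      ∃ φ : Quotient s' → Quotient s,
        Function.Surjective φ ∧ (∀ x y, R x y ↔ φ x = φ y) ∧
        ∀ i x, φ (σ' i x) = σq i (φ x) :=
  stmt_4_general σ s s' href σ' hσ' σq hσq
end

section
/- Let N be a feed-forward network with layers C₀, …, C_m and L a feed-forward lift of N with layers C'₀, …, C'_n, with L backward connected, and let ⋈ be the balanced equivalence relation on L with L/⋈ = N. Then the image of layer C'_{n−j} under the quotient map equals C_{m−j} for 0 ≤ j ≤ m, and the images of C'₀, C'₁, …, C'_{n−m} all equal C₀. -/
/-!
Every cell of the lift is reached from the backward root `c₀` by a word in the `σ`'s, and along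
such a word both the layer in `L` and the layer of the image in `N` drop by one per letter, until
they get stuck at `0`. Since `c₀` sits in the top layer of `L` and `π c₀` in the top layer of `N`,
a cell of layer `t` in `L` maps to layer `m - (n - t)` in `N`; in particular `m ≤ n`. Conversely
every cell of layer `m - (n - t) > 0` in `N` is the image of a cell of layer `t`, and the fibre of
a cell of layer `0` can be moved up (by the source condition of `L`) and down (by any `σ`)
through all layers `0, …, n - m`.
-/

open Relation

/-- Edges run from `σ i b` to `b`. -/
def IsBackwardRoot {ι C : Type*} (σ : ι → C → C) (c₀ : C) : Prop :=
  ∀ c, ReflTransGen (fun a b => ∃ i, a = σ i b) c c₀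

section Layers

variable {ι C : Type*} {σ : ι → C → C}

theorem layer_apply_eq_sub_one {lay : C → ℕ} (hfix : ∀ i c, lay c = 0 → σ i c = c)
    (hdown : ∀ i c j, lay c = j + 1 → lay (σ i c) = j) (i : ι) (c : C) :
    lay (σ i c) = lay c - 1 := by
  rcases Nat.eq_zero_or_pos (lay c) with h | h
  · rw [hfix i c h, h]
  · exact hdown i c _ (by omega)

theorem le_of_reflTransGen {α : Type*} [Preorder α] {f : C → α} (hf : ∀ i c, f (σ i c) ≤ f c)
    {a b : C} (h : ReflTransGen (fun a b => ∃ i, a = σ i b) a b) : f a ≤ f b := by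
  induction h with
  | refl => exact le_rfl
  | tail _ hbc ih =>
    obtain ⟨i, rfl⟩ := hbc
    exact ih.trans (hf i _)

theorem IsBackwardRoot.apply_eq_of_forall_le {f : C → ℕ} {n : ℕ} {c₀ : C}
    (hc₀ : IsBackwardRoot σ c₀) (hf : ∀ i c, f (σ i c) ≤ f c) (hle : ∀ c, f c ≤ n)
    (hex : ∃ c, f c = n) : f c₀ = n := by
  obtain ⟨c, hc⟩ := hex
  exact (hle c₀).antisymm (hc ▸ le_of_reflTransGen hf (hc₀ c))

end Layers

section Lift

variable {ι CL CN : Type*} {σL : ι → CL → CL} {σN : ι → CN → CN}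
  {layL : CL → ℕ} {layN : CN → ℕ} {π : CL → CN} {n m : ℕ}

theorem IsBackwardRoot.layer_map_eq {c₀ : CL} (hc₀ : IsBackwardRoot σL c₀)
    (hlayL : ∀ c, layL c ≤ n) (hfixL : ∀ i c, layL c = 0 → σL i c = c)
    (hσL : ∀ i c, layL (σL i c) = layL c - 1) (hσN : ∀ i d, layN (σN i d) = layN d - 1)
    (hπ : ∀ i c, π (σL i c) = σN i (π c)) (hc₀L : layL c₀ = n) (hc₀N : layN (π c₀) = m)
    (c : CL) : layN (π c) = m - (n - layL c) := by
  induction hc₀ c using ReflTransGen.head_induction_on with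
  | refl => omega
  | @head _ c hac _ ih =>
    obtain ⟨i, rfl⟩ := hac
    rcases Nat.eq_zero_or_pos (layL c) with h | h
    · rwa [hfixL i c h]
    · rw [hπ, hσN, hσL, ih]
      have := hlayL c
      omega

theorem exists_layer_eq_map_eq_of_le (hσL : ∀ i c, layL (σL i c) = layL c - 1)
    (hfixN : ∀ i d, layN d = 0 → σN i d = d) (hπ : ∀ i c, π (σL i c) = σN i (π c)) (i : ι)
    {c : CL} (hc : layN (π c) = 0) {t : ℕ} (ht : t ≤ layL c) :
    ∃ c', layL c' = t ∧ π c' = π c := by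
  refine ⟨(σL i)^[layL c - t] c, ?_, ?_⟩
  · have hsemi : Function.Semiconj layL (σL i) Nat.pred := fun c => hσL i c
    rw [(hsemi.iterate_right _).eq, Nat.pred_iterate]
    omega
  · have hsemi : Function.Semiconj π (σL i) (σN i) := hπ i
    rw [(hsemi.iterate_right _).eq, Function.iterate_fixed (hfixN i _ hc)]

/-- Going up uses the source condition: a source of a cell whose image lies in layer `0`
again maps to layer `0`, where `σN` acts trivially, so it has the same image. -/
theorem exists_layer_eq_map_eq_of_ge (hfixN : ∀ i d, layN d = 0 → σN i d = d)
    (hπ : ∀ i c, π (σL i c) = σN i (π c))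
    (hsourceL : ∀ c, layL c < n → ∃ c' i, layL c' = layL c + 1 ∧ σL i c' = c)
    (hmap : ∀ c, layN (π c) = m - (n - layL c)) {c : CL} {t : ℕ} (hct : layL c ≤ t)
    (ht : t ≤ n - m) : ∃ c', layL c' = t ∧ π c' = π c := by
  induction t, hct using Nat.le_induction with
  | base => exact ⟨c, rfl, rfl⟩
  | succ t _ ih =>
    obtain ⟨c', hc't, hc'c⟩ := ih (by omega)
    obtain ⟨c'', i, hc''t, rfl⟩ := hsourceL c' (by omega)
    have hc''0 : layN (π c'') = 0 := by rw [hmap]; omega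
    exact ⟨c'', by omega, by rw [← hc'c, hπ, hfixN i _ hc''0]⟩

theorem image_layer_eq (hπsurj : Function.Surjective π) (hlayL : ∀ c, layL c ≤ n)
    (hbot : ∃ c, layL c = 0) (hσL : ∀ i c, layL (σL i c) = layL c - 1)
    (hfixN : ∀ i d, layN d = 0 → σN i d = d) (hπ : ∀ i c, π (σL i c) = σN i (π c))
    (hsourceL : ∀ c, layL c < n → ∃ c' i, layL c' = layL c + 1 ∧ σL i c' = c)
    (hmap : ∀ c, layN (π c) = m - (n - layL c)) {t : ℕ} (ht : t ≤ n) :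
    π '' {c | layL c = t} = {d | layN d = m - (n - t)} := by
  ext d
  constructor
  · rintro ⟨c, rfl, rfl⟩
    exact hmap c
  · intro hd
    obtain ⟨c, rfl⟩ := hπsurj d
    have hc := hmap c
    have hcn := hlayL c
    change layN (π c) = _ at hd
    change ∃ c', layL c' = t ∧ π c' = π c
    rcases Nat.eq_zero_or_pos (layN (π c)) with h0 | hpos
    · rcases le_total t (layL c) with hle | hge
      · rcases hle.eq_or_lt with heq | hlt
        · exact ⟨c, heq.symm, rfl⟩
        obtain ⟨b, hb⟩ := hbot
        obtain ⟨-, i, -⟩ := hsourceL b (by omega)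
        exact exists_layer_eq_map_eq_of_le hσL hfixN hπ i h0 hlt.le
      · exact exists_layer_eq_map_eq_of_ge hfixN hπ hsourceL hmap hge (by omega)
    · exact ⟨c, by omega, rfl⟩

end Lift

theorem stmt_7_general {CL CN : Type*} {k : ℕ}
    (σL : Fin k → CL → CL) (σN : Fin k → CN → CN)
    (n m : ℕ)
    (layL : CL → ℕ) (layN : CN → ℕ)
    (hlayL : ∀ c, layL c ≤ n) (hlayN : ∀ c, layN c ≤ m)
    (hsurjL : ∀ j ≤ n, ∃ c, layL c = j) (hsurjN : ∀ j ≤ m, ∃ c, layN c = j)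
    (hfixL : ∀ i c, layL c = 0 → σL i c = c)
    (hdownL : ∀ i c j, layL c = j + 1 → layL (σL i c) = j)
    (hsourceL : ∀ c, layL c < n → ∃ c' i, layL c' = layL c + 1 ∧ σL i c' = c)
    (hfixN : ∀ i c, layN c = 0 → σN i c = c)
    (hdownN : ∀ i c j, layN c = j + 1 → layN (σN i c) = j)
    (π : CL → CN) (hπsurj : Function.Surjective π)
    (hπ : ∀ i c, π (σL i c) = σN i (π c))
    (hbc : ∃ c : CL, ∀ c' : CL,
      Relation.ReflTransGen (fun a b => ∃ i, a = σL i b) c' c) :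
    m ≤ n ∧
    (∀ j ≤ m, π '' {c | layL c = n - j} = {d | layN d = m - j}) ∧
    (∀ j' ≤ n - m, π '' {c | layL c = j'} = {d | layN d = 0}) := by
  obtain ⟨c₀, hc₀⟩ := hbc
  have hσL := layer_apply_eq_sub_one hfixL hdownL
  have hσN := layer_apply_eq_sub_one hfixN hdownN
  have hc₀L : layL c₀ = n :=
    IsBackwardRoot.apply_eq_of_forall_le hc₀ (fun i c => (hσL i c).trans_le (Nat.sub_le _ _))
      hlayL (hsurjL n le_rfl)
  have hc₀N : layN (π c₀) = m := by
    refine IsBackwardRoot.apply_eq_of_forall_le (f := layN ∘ π) hc₀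
      (fun i c => ?_) (fun c => hlayN (π c)) ?_
    · simp only [Function.comp_apply, hπ, hσN, Nat.sub_le]
    · obtain ⟨d, hd⟩ := hsurjN m le_rfl
      obtain ⟨c, rfl⟩ := hπsurj d
      exact ⟨c, hd⟩
  have hmap := IsBackwardRoot.layer_map_eq hc₀ hlayL hfixL hσL hσN hπ hc₀L hc₀N
  have himage := fun t (ht : t ≤ n) =>
    image_layer_eq hπsurj hlayL (hsurjL 0 (Nat.zero_le n)) hσL hfixN hπ hsourceL hmap ht
  have hmn : m ≤ n := by
    obtain ⟨d, hd⟩ := hsurjN 0 (Nat.zero_le m)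
    obtain ⟨c, rfl⟩ := hπsurj d
    have := hmap c
    omega
  refine ⟨hmn, fun j hj => ?_, fun j' hj' => ?_⟩
  · rw [himage _ (Nat.sub_le n j), Nat.sub_sub_self (hj.trans hmn)]
  · rw [himage _ (by omega), show m - (n - j') = 0 by omega]

/-- Lemma on layers of a backward connected feed-forward lift:
the quotient map sends layer `C'_{n-j}` of the lift onto layer `C_{m-j}` of the
quotient for `0 ≤ j ≤ m`, and sends each of the layers `C'_0, …, C'_{n-m}` onto
the first layer `C_0`. -/
theorem stmt_7 {CL CN : Type*} [Fintype CL] [Fintype CN] {k : ℕ}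
    (σL : Fin k → CL → CL) (σN : Fin k → CN → CN)
    (n m : ℕ)
    (layL : CL → ℕ) (layN : CN → ℕ)
    (hlayL : ∀ c, layL c ≤ n) (hlayN : ∀ c, layN c ≤ m)
    (hsurjL : ∀ j ≤ n, ∃ c, layL c = j) (hsurjN : ∀ j ≤ m, ∃ c, layN c = j)
    (hfixL : ∀ i c, layL c = 0 → σL i c = c)
    (hdownL : ∀ i c j, layL c = j + 1 → layL (σL i c) = j)
    (hsourceL : ∀ c, layL c < n → ∃ c' i, layL c' = layL c + 1 ∧ σL i c' = c)
    (hfixN : ∀ i c, layN c = 0 → σN i c = c)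
    (hdownN : ∀ i c j, layN c = j + 1 → layN (σN i c) = j)
    (hsourceN : ∀ c, layN c < m → ∃ c' i, layN c' = layN c + 1 ∧ σN i c' = c)
    (π : CL → CN) (hπsurj : Function.Surjective π)
    (hπ : ∀ i c, π (σL i c) = σN i (π c))
    (hbc : ∃ c : CL, ∀ c' : CL,
      Relation.ReflTransGen (fun a b => ∃ i, a = σL i b) c' c) :
    m ≤ n ∧
    (∀ j ≤ m, π '' {c | layL c = n - j} = {d | layN d = m - j}) ∧
    (∀ j' ≤ n - m, π '' {c | layL c = j'} = {d | layN d = 0}) :=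
  stmt_7_general σL σN n m layL layN hlayL hlayN hsurjL hsurjN hfixL hdownL hsourceL hfixN hdownN π
    hπsurj hπ hbc
end

section
/- Let N be a feed-forward network and L a lift of N such that L is a backward connected feed-forward network. If ⋈₁ and ⋈₂ are balanced equivalence relations on L with L/⋈₁ = L/⋈₂ = N (the quotient maps commuting with the network structure maps of N), then ⋈₁ = ⋈₂. -/
/-!
Along any path of inputs in a feed-forward network the layer can only drop, and a step that keeps
the layer is a loop at a layer-0 cell; hence "is upstream of" is antisymmetric in `N`. A map
`π : L → N` commuting with the structure maps sends the backward-connected root `r` of `L` to a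
cell that every cell of `N` lies upstream of, provided `π` is surjective. Two such maps `π₁`, `π₂`
therefore send `r` to mutually upstream cells, so `π₁ r = π₂ r`. Finally, the cells on which
`π₁` and `π₂` agree are closed under the structure maps, and every cell of `L` lies upstream of `r`.
-/

open Relation

section Network

variable {ι C D : Type*}

def IsInput (σ : ι → C → C) (a b : C) : Prop := ∃ i, a = σ i b

structure IsLayering (σ : ι → C → C) (lay : C → ℕ) : Prop where
  fix : ∀ i c, lay c = 0 → σ i c = c
  down : ∀ i c j, lay c = j + 1 → lay (σ i c) = j

namespace IsLayering

variable {σ : ι → C → C} {lay : C → ℕ}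

theorem lay_le_of_isInput (h : IsLayering σ lay) {a b : C} (hab : IsInput σ a b) :
    lay a ≤ lay b := by
  obtain ⟨i, rfl⟩ := hab
  cases hb : lay b with
  | zero => rw [h.fix i b hb, hb]
  | succ j => rw [h.down i b j hb]; omega

theorem eq_of_isInput_of_lay_eq (h : IsLayering σ lay) {a b : C} (hab : IsInput σ a b)
    (hlay : lay a = lay b) : a = b := by
  obtain ⟨i, rfl⟩ := hab
  cases hb : lay b with
  | zero => exact h.fix i b hb
  | succ j => have := h.down i b j hb; omega

theorem lay_le_of_reflTransGen (h : IsLayering σ lay) {a b : C}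
    (hab : ReflTransGen (IsInput σ) a b) : lay a ≤ lay b := by
  induction hab with
  | refl => exact le_rfl
  | tail _ hbc ih => exact ih.trans (h.lay_le_of_isInput hbc)

theorem eq_of_reflTransGen_of_lay_eq (h : IsLayering σ lay) {a b : C}
    (hab : ReflTransGen (IsInput σ) a b) (hlay : lay a = lay b) : a = b := by
  induction hab with
  | refl => rfl
  | @tail b c hab hbc ih =>
    have hab' := h.lay_le_of_reflTransGen hab
    have hbc' := h.lay_le_of_isInput hbc
    rw [ih (by omega), h.eq_of_isInput_of_lay_eq hbc (by omega)]

theorem reflTransGen_antisymm (h : IsLayering σ lay) {a b : C}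
    (hab : ReflTransGen (IsInput σ) a b) (hba : ReflTransGen (IsInput σ) b a) : a = b :=
  h.eq_of_reflTransGen_of_lay_eq hab
    (le_antisymm (h.lay_le_of_reflTransGen hab) (h.lay_le_of_reflTransGen hba))

end IsLayering

variable {σL : ι → C → C} {σN : ι → D → D} {π : C → D}

theorem IsInput.map (hπ : ∀ i c, π (σL i c) = σN i (π c)) {a b : C} (hab : IsInput σL a b) :
    IsInput σN (π a) (π b) := by
  obtain ⟨i, rfl⟩ := hab
  exact ⟨i, hπ i b⟩

theorem reflTransGen_isInput_map_root (hπ : ∀ i c, π (σL i c) = σN i (π c))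
    (hsurj : Function.Surjective π) {r : C} (hr : ∀ c, ReflTransGen (IsInput σL) c r) (d : D) :
    ReflTransGen (IsInput σN) d (π r) := by
  obtain ⟨c, rfl⟩ := hsurj d
  exact ReflTransGen.lift π (fun _ _ => IsInput.map hπ) _ _ (hr c)

theorem eq_of_reflTransGen_isInput {π₁ π₂ : C → D} (hπ₁ : ∀ i c, π₁ (σL i c) = σN i (π₁ c))
    (hπ₂ : ∀ i c, π₂ (σL i c) = σN i (π₂ c)) {a b : C} (hab : ReflTransGen (IsInput σL) a b)
    (hb : π₁ b = π₂ b) : π₁ a = π₂ a := by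
  induction hab using ReflTransGen.head_induction_on with
  | refl => exact hb
  | head hac _ ih =>
    obtain ⟨i, rfl⟩ := hac
    rw [hπ₁, hπ₂, ih]

end Network

theorem stmt_8_general {CL CN : Type*} {k : ℕ}
    (σL : Fin k → CL → CL) (σN : Fin k → CN → CN)
    (layN : CN → ℕ)
    (hfixN : ∀ i c, layN c = 0 → σN i c = c)
    (hdownN : ∀ i c j, layN c = j + 1 → layN (σN i c) = j)
    (hbc : ∃ c : CL, ∀ c' : CL,
      Relation.ReflTransGen (fun a b => ∃ i, a = σL i b) c' c)
    (π₁ π₂ : CL → CN)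
    (hπ₁surj : Function.Surjective π₁) (hπ₂surj : Function.Surjective π₂)
    (hπ₁ : ∀ i c, π₁ (σL i c) = σN i (π₁ c))
    (hπ₂ : ∀ i c, π₂ (σL i c) = σN i (π₂ c)) :
    π₁ = π₂ := by
  obtain ⟨r, hr⟩ := hbc
  have hN : IsLayering σN layN := ⟨hfixN, hdownN⟩
  have hroot : π₁ r = π₂ r := hN.reflTransGen_antisymm
    (reflTransGen_isInput_map_root hπ₂ hπ₂surj hr (π₁ r))
    (reflTransGen_isInput_map_root hπ₁ hπ₁surj hr (π₂ r))
  funext c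
  exact eq_of_reflTransGen_isInput hπ₁ hπ₂ (hr c) hroot

/-- a backward connected feed-forward lift `L` of a feed-forward
network `N` admits a unique balanced quotient onto `N`: two quotient maps
commuting with the network structure maps coincide. -/
theorem stmt_8 {CL CN : Type*} [Fintype CL] [Fintype CN] {k : ℕ}
    (σL : Fin k → CL → CL) (σN : Fin k → CN → CN)
    (n m : ℕ)
    (layL : CL → ℕ) (layN : CN → ℕ)
    (hlayL : ∀ c, layL c ≤ n) (hlayN : ∀ c, layN c ≤ m)
    (hsurjL : ∀ j ≤ n, ∃ c, layL c = j) (hsurjN : ∀ j ≤ m, ∃ c, layN c = j)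
    (hfixL : ∀ i c, layL c = 0 → σL i c = c)
    (hdownL : ∀ i c j, layL c = j + 1 → layL (σL i c) = j)
    (hsourceL : ∀ c, layL c < n → ∃ c' i, layL c' = layL c + 1 ∧ σL i c' = c)
    (hfixN : ∀ i c, layN c = 0 → σN i c = c)
    (hdownN : ∀ i c j, layN c = j + 1 → layN (σN i c) = j)
    (hsourceN : ∀ c, layN c < m → ∃ c' i, layN c' = layN c + 1 ∧ σN i c' = c)
    (hbc : ∃ c : CL, ∀ c' : CL,
      Relation.ReflTransGen (fun a b => ∃ i, a = σL i b) c' c)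
    (π₁ π₂ : CL → CN)
    (hπ₁surj : Function.Surjective π₁) (hπ₂surj : Function.Surjective π₂)
    (hπ₁ : ∀ i c, π₁ (σL i c) = σN i (π₁ c))
    (hπ₂ : ∀ i c, π₂ (σL i c) = σN i (π₂ c)) :
    π₁ = π₂ :=
  stmt_8_general σL σN layN hfixN hdownN hbc π₁ π₂ hπ₁surj hπ₂surj hπ₁ hπ₂
end

section
/- Let N be a feed-forward network with layers C₀, C₁, …, C_m and adjacency matrices A₁, …, A_k, and let f₀, f₁, …, f_k be real numbers. Then the matrix J = f₀·Id + Σ_{i=1}^k f_i·A_i has exactly the eigenvalues f₀ + Σ_{i=1}^k f_i and f₀ (when m ≥ 1); equivalently, its characteristic polynomial is (x − (f₀ + Σ_{i=1}^k f_i))^{|C₀|} · (x − f₀)^{|C| − |C₀|}. -/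
/-!
Every coupling edge `c → σᵢ c` either fixes `c` (on `C₀`) or drops exactly one layer. Hence
`J c c' = 0` whenever `c ≠ c'` and `layer c ≤ layer c'`: after ordering the cells by layer, `J` is
lower triangular, so its characteristic polynomial is `∏ c, (X - J c c)`. The diagonal entry is
`f₀ + Σ fᵢ` on `C₀`, where every `σᵢ` fixes the cell, and `f₀` elsewhere.
-/

open Polynomial

namespace Matrix

variable {n R α : Type*} [Fintype n] [DecidableEq n] [CommRing R] [LinearOrder α]

theorem det_eq_prod_diag_of_forall_le (M : Matrix n n R) (b : n → α)
    (hM : ∀ i j, i ≠ j → b i ≤ b j → M i j = 0) : M.det = ∏ i, M i i := by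
  -- refine the preorder pulled back along `b` to a linear order, making `M` lower triangular
  let key : n → α ×ₗ Fin (Fintype.card n) := fun i => toLex (b i, Fintype.equivFin n i)
  have key_inj : key.Injective := fun i j h => by
    simpa using (Prod.ext_iff.mp (toLex.injective h)).2
  let : LinearOrder n := LinearOrder.lift' key key_inj
  refine M.det_of_isLowerTriangular fun i j hij => hM i j hij.ne' ?_
  rcases Prod.Lex.lt_iff.mp (show key i < key j from hij) with h | h
  · exact h.le
  · exact h.1.le

theorem charpoly_eq_prod_of_forall_le (M : Matrix n n R) (b : n → α)
    (hM : ∀ i j, i ≠ j → b i ≤ b j → M i j = 0) : M.charpoly = ∏ i, (X - C (M i i)) := by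
  rw [charpoly, det_eq_prod_diag_of_forall_le _ b fun i j hij hb => ?_]
  · simp only [charmatrix_apply_eq]
  · rw [charmatrix_apply_ne _ _ _ hij, hM i j hij hb, map_zero, neg_zero]

end Matrix

namespace FeedForward

open Matrix

variable {C ι R : Type*}

structure IsFeedForward (σ : ι → C → C) (layer : C → ℕ) : Prop where
  map_eq_self : ∀ i c, layer c = 0 → σ i c = c
  layer_map : ∀ i c j, layer c = j + 1 → layer (σ i c) = j

section Jacobian

variable [Fintype ι] [DecidableEq C] [CommRing R]

def jacobian (σ : ι → C → C) (f0 : R) (f : ι → R) : Matrix C C R :=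
  f0 • (1 : Matrix C C R) + ∑ i, f i • of fun c c' => if c' = σ i c then (1 : R) else 0

theorem jacobian_apply (σ : ι → C → C) (f0 : R) (f : ι → R) (c c' : C) :
    jacobian σ f0 f c c' = (if c = c' then f0 else 0) + ∑ i, if c' = σ i c then f i else 0 := by
  simp [jacobian, one_apply, Matrix.sum_apply]

end Jacobian

namespace IsFeedForward

variable {σ : ι → C → C} {layer : C → ℕ}

theorem map_eq_self_iff (h : IsFeedForward σ layer) {i : ι} {c : C} :
    σ i c = c ↔ layer c = 0 := by
  refine ⟨fun hi => ?_, h.map_eq_self i c⟩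
  rcases hc : layer c with _ | j
  · rfl
  · have := h.layer_map i c j hc
    rw [hi, hc] at this
    omega

theorem layer_map_lt (h : IsFeedForward σ layer) {i : ι} {c : C} (hc : σ i c ≠ c) :
    layer (σ i c) < layer c := by
  rcases hlc : layer c with _ | j
  · exact absurd (h.map_eq_self i c hlc) hc
  · rw [h.layer_map i c j hlc]
    omega

variable [Fintype ι] [DecidableEq C] [CommRing R]

theorem jacobian_apply_of_ne_of_le (h : IsFeedForward σ layer) (f0 : R) (f : ι → R)
    {c c' : C} (hne : c ≠ c') (hle : layer c ≤ layer c') : jacobian σ f0 f c c' = 0 := by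
  rw [jacobian_apply, if_neg hne, zero_add]
  refine Finset.sum_eq_zero fun i _ => if_neg ?_
  rintro rfl
  have := h.layer_map_lt (Ne.symm hne)
  omega

theorem jacobian_apply_self (h : IsFeedForward σ layer) (f0 : R) (f : ι → R) (c : C) :
    jacobian σ f0 f c c = if layer c = 0 then f0 + ∑ i, f i else f0 := by
  simp only [jacobian_apply, if_true, eq_comm (a := c), h.map_eq_self_iff]
  split_ifs <;> simp

theorem charpoly_jacobian [Fintype C] (h : IsFeedForward σ layer) (f0 : R) (f : ι → R) :
    (jacobian σ f0 f).charpoly =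
      (X - Polynomial.C (f0 + ∑ i, f i)) ^ (Finset.univ.filter fun c => layer c = 0).card *
        (X - Polynomial.C f0) ^
          (Fintype.card C - (Finset.univ.filter fun c => layer c = 0).card) := by
  rw [charpoly_eq_prod_of_forall_le _ layer fun c c' => h.jacobian_apply_of_ne_of_le f0 f]
  simp only [h.jacobian_apply_self, apply_ite Polynomial.C, apply_ite (HSub.hSub X)]
  rw [Finset.prod_ite, Finset.prod_const, Finset.prod_const, Finset.filter_not,
    ← Finset.compl_eq_univ_sdiff, Finset.card_compl]

end IsFeedForward

end FeedForward

theorem stmt_9_general {C : Type*} [Fintype C] [DecidableEq C] {k : ℕ}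
    (σ : Fin k → C → C)
    (layer : C → ℕ)
    (hfix : ∀ i c, layer c = 0 → σ i c = c)
    (hdown : ∀ i c j, layer c = j + 1 → layer (σ i c) = j)
    (f0 : ℝ) (f : Fin k → ℝ) :
    Matrix.charpoly
        (f0 • (1 : Matrix C C ℝ) +
          ∑ i, f i • Matrix.of (fun c c' => if c' = σ i c then (1 : ℝ) else 0)) =
      (X - Polynomial.C (f0 + ∑ i, f i)) ^
          (Finset.univ.filter (fun c => layer c = 0)).card *
        (X - Polynomial.C f0) ^
          (Fintype.card C - (Finset.univ.filter (fun c => layer c = 0)).card) :=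
  FeedForward.IsFeedForward.charpoly_jacobian ⟨hfix, hdown⟩ f0 f

/-- the Jacobian `J = f₀·Id + Σ f_i·A_i` of a feed-forward system
at a fully synchronous equilibrium has characteristic polynomial
`(X − (f₀ + Σ f_i))^{|C₀|} (X − f₀)^{|C|−|C₀|}`. -/
theorem stmt_9 {C : Type*} [Fintype C] [DecidableEq C] {k : ℕ}
    (σ : Fin k → C → C) (m : ℕ) (hm : 1 ≤ m)
    (layer : C → ℕ) (hlayer : ∀ c, layer c ≤ m)
    (hsurj : ∀ j ≤ m, ∃ c, layer c = j)
    (hfix : ∀ i c, layer c = 0 → σ i c = c)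
    (hdown : ∀ i c j, layer c = j + 1 → layer (σ i c) = j)
    (f0 : ℝ) (f : Fin k → ℝ) :
    Matrix.charpoly
        (f0 • (1 : Matrix C C ℝ) +
          ∑ i, f i • Matrix.of (fun c c' => if c' = σ i c then (1 : ℝ) else 0)) =
      (X - Polynomial.C (f0 + ∑ i, f i)) ^
          (Finset.univ.filter (fun c => layer c = 0)).card *
        (X - Polynomial.C f0) ^
          (Fintype.card C - (Finset.univ.filter (fun c => layer c = 0)).card) :=
  stmt_9_general σ layer hfix hdown f0 f
end

section
/- Let F : ℝ^d × ℝ → ℝ^d be a smooth function and K ⊆ ℝ^d a linear subspace such that the generalized kernel (center subspace for eigenvalue 0) of the Jacobian D_x F(0,0) is contained in K, F(0,0) = 0, and F(K, λ) ⊆ K for every λ. Suppose x : D → ℝ^d is continuous on a domain D ⊆ ℝ containing 0 with x(0) = 0 and F(x(λ), λ) = 0 for λ ∈ D. Then there is a neighborhood U of 0 such that x(λ) ∈ K for all λ ∈ U ∩ D. -/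
open LinearMap Set Filter Topology


lemma key_step {E : Type*} [AddCommGroup E] [Module ℝ E] [FiniteDimensional ℝ E]
    (A : E →ₗ[ℝ] E) (K : Submodule ℝ E)
    (hker : ∀ v, (∃ r : ℕ, (A ^ r) v = 0) → v ∈ K)
    (hAK : ∀ v ∈ K, A v ∈ K) :
    ∀ v, A v ∈ K → v ∈ K := by
  obtain ⟨n₀, hn₀⟩ := Filter.eventually_atTop.mp
    (A.eventually_isCompl_ker_pow_range_pow.and A.eventually_iInf_range_pow_eq)
  set m := max n₀ 1 with hm
  obtain ⟨hcompl, hinf⟩ := hn₀ m (le_max_left _ _)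
  obtain ⟨-, hinf'⟩ := hn₀ (m + 1) ((le_max_left _ _).trans (Nat.le_succ m))
  set N := LinearMap.ker (A ^ m) with hN
  set R := LinearMap.range (A ^ m) with hR
  have hRR : LinearMap.range (A ^ (m + 1)) = R := by rw [← hinf', hinf]
  have hNK : N ≤ K := fun v hv => hker v ⟨m, hv⟩
  have hAR : ∀ w ∈ R, A w ∈ R := by
    rintro w ⟨y, rfl⟩
    rw [← hRR]
    exact ⟨y, by rw [pow_succ', Module.End.mul_apply]⟩
  have hAinjR : ∀ w ∈ R, A w = 0 → w = 0 := by
    intro w hwR hw0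
    have hwN : w ∈ N := by
      have h1 : (A ^ 1) w = 0 := by simpa using hw0
      exact Module.End.pow_map_zero_of_le (le_max_right n₀ 1) h1
    exact (Submodule.disjoint_def.mp hcompl.disjoint) w hwN hwR
  intro v hv
  obtain ⟨u, w, huw, -⟩ := Submodule.existsUnique_add_of_isCompl hcompl v
  have hu0 : (A ^ m) (u : E) = 0 := LinearMap.mem_ker.mp u.2
  have hAu : A (u : E) ∈ N := by
    have h2 : (A ^ m) (A (u : E)) = 0 := by
      rw [← Module.End.mul_apply, ← pow_succ, pow_succ', Module.End.mul_apply, hu0, map_zero]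
    exact LinearMap.mem_ker.mpr h2
  have hAwK : A (w : E) ∈ K := by
    have h3 : A (w : E) = A v - A (u : E) := by rw [← huw]; simp
    rw [h3]
    exact K.sub_mem hv (hNK hAu)
  have hAwR : A (w : E) ∈ R := hAR _ w.2
  set K' : Submodule ℝ E := K ⊓ R with hK'
  have hAK' : ∀ z ∈ K', A z ∈ K' := fun z hz => ⟨hAK z hz.1, hAR z hz.2⟩
  set A' : K' →ₗ[ℝ] K' := A.restrict hAK' with hA'
  have hinj : Function.Injective A' := by
    rw [← LinearMap.ker_eq_bot, Submodule.eq_bot_iff]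
    rintro z hz
    have h4 : A (z : E) = 0 := congrArg Subtype.val hz
    exact Subtype.ext (hAinjR _ z.2.2 h4)
  have hsurj : Function.Surjective A' := LinearMap.injective_iff_surjective.mp hinj
  obtain ⟨z, hz⟩ := hsurj ⟨A (w : E), hAwK, hAwR⟩
  have hz' : A (z : E) = A (w : E) := congrArg Subtype.val hz
  have hwz : (w : E) = (z : E) := by
    have h1 : A ((w : E) - z) = 0 := by rw [map_sub, hz']; simp
    exact sub_eq_zero.mp (hAinjR _ (R.sub_mem w.2 z.2.2) h1)
  rw [← huw]
  exact K.add_mem (hNK u.2) (hwz ▸ z.2.1)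

/-- if a flow-invariant subspace `K` contains the generalized
kernel of the Jacobian at the bifurcation point, then any continuous branch of
equilibria through the origin lies in `K` near the origin. -/
theorem stmt_10 {d : ℕ} (F : (Fin d → ℝ) → ℝ → (Fin d → ℝ))
    (hF : ContDiff ℝ (⊤ : ℕ∞) (fun p : (Fin d → ℝ) × ℝ => F p.1 p.2))
    (K : Submodule ℝ (Fin d → ℝ))
    (hker : ∀ v : Fin d → ℝ,
      (∃ r : ℕ,
        (((fderiv ℝ (fun x => F x 0) 0 :
            (Fin d → ℝ) →L[ℝ] (Fin d → ℝ)) :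
            (Fin d → ℝ) →ₗ[ℝ] (Fin d → ℝ)) ^ r) v = 0) → v ∈ K)
    (h0 : F 0 0 = 0)
    (hinv : ∀ lam : ℝ, ∀ x ∈ K, F x lam ∈ K)
    (D : Set ℝ)
    (hD : ∃ lam0 > (0 : ℝ),
      D = Set.Ioc (-lam0) 0 ∨ D = Set.Ioo (-lam0) lam0 ∨ D = Set.Ico 0 lam0)
    (x : ℝ → Fin d → ℝ) (hx : ContinuousOn x D) (hx0 : x 0 = 0)
    (hsol : ∀ lam ∈ D, F (x lam) lam = 0) :
    ∃ U ∈ nhds (0 : ℝ), ∀ lam ∈ U ∩ D, x lam ∈ K := by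
  set f : (Fin d → ℝ) × ℝ → (Fin d → ℝ) := fun p => F p.1 p.2 with hf
  set A : (Fin d → ℝ) →L[ℝ] (Fin d → ℝ) := fderiv ℝ (fun x => F x 0) 0 with hA
  have h0D : (0 : ℝ) ∈ D := by
    obtain ⟨l0, hl0, h | h | h⟩ := hD <;> subst h <;>
      simp [hl0, neg_lt_zero, hl0.le]
  have hfd : Differentiable ℝ f := hF.differentiable (by simp)
  have hF0diff : Differentiable ℝ (fun y : Fin d → ℝ => F y 0) :=
    hfd.comp (differentiable_id.prodMk (differentiable_const 0))
  have hAderiv : HasFDerivAt (fun y : Fin d → ℝ => F y 0) A 0 := (hF0diff 0).hasFDerivAt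
  have hclosed : IsClosed (K : Set (Fin d → ℝ)) := K.closed_of_finiteDimensional
  -- Step 1 : A maps K into K
  have hAK : ∀ v ∈ K, A v ∈ K := by
    intro v hv
    set L : ℝ →L[ℝ] (Fin d → ℝ) := (ContinuousLinearMap.id ℝ ℝ).smulRight v with hL
    have hL0 : L 0 = 0 := by simp
    have hAderiv' : HasFDerivAt (fun y : Fin d → ℝ => F y 0) A (L 0) := by
      rw [hL0]; exact hAderiv
    have h1 : HasDerivAt (fun t : ℝ => L t) (L 1) 0 := L.hasDerivAt
    have h2 : HasDerivAt (fun t : ℝ => F (L t) 0) (A (L 1)) 0 :=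
      hAderiv'.comp_hasDerivAt 0 h1
    have hg : HasDerivAt (fun t : ℝ => F (t • v) 0) (A v) 0 := by
      have hLt : ∀ t : ℝ, L t = t • v := fun t => by simp [hL]
      simpa [hLt] using h2
    have htend := hasDerivAt_iff_tendsto_slope.mp hg
    refine hclosed.mem_of_tendsto htend (Filter.eventually_of_mem self_mem_nhdsWithin ?_)
    intro t ht
    have hmem : (t • v : Fin d → ℝ) ∈ K := K.smul_mem t hv
    have hFt : F (t • v) 0 ∈ K := hinv 0 _ hmem
    have hF0 : F ((0:ℝ) • v) 0 ∈ K := by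
      simpa using hinv 0 (0 : Fin d → ℝ) K.zero_mem
    have : slope (fun t : ℝ => F (t • v) 0) 0 t
        = (t - 0)⁻¹ • (F (t • v) 0 - F ((0:ℝ) • v) 0) := by
      simp [slope]
    rw [this]
    exact K.smul_mem _ (K.sub_mem hFt hF0)
  -- Step 2 : key linear implication
  have hkey : ∀ v : Fin d → ℝ, (A : (Fin d → ℝ) →ₗ[ℝ] (Fin d → ℝ)) v ∈ K → v ∈ K :=
    key_step (A : (Fin d → ℝ) →ₗ[ℝ] (Fin d → ℝ)) K hker hAK
  -- Step 3 : complement and projections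
  obtain ⟨W, hW⟩ := Submodule.exists_isCompl K
  set Pl : (Fin d → ℝ) →ₗ[ℝ] (Fin d → ℝ) := K.subtype ∘ₗ K.linearProjOfIsCompl W hW with hPl
  set Ql : (Fin d → ℝ) →ₗ[ℝ] (Fin d → ℝ) :=
    W.subtype ∘ₗ W.linearProjOfIsCompl K hW.symm with hQl
  have hPQ : ∀ y : Fin d → ℝ, Pl y + Ql y = y := fun y =>
    Submodule.projection_add_projection_eq_self hW y
  have hPmem : ∀ y : Fin d → ℝ, Pl y ∈ K := fun y => (K.linearProjOfIsCompl W hW y).2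
  have hQmem : ∀ y : Fin d → ℝ, Ql y ∈ W := fun y => (W.linearProjOfIsCompl K hW.symm y).2
  have hPK : ∀ y ∈ K, Pl y = y := by
    intro y hy
    have h := Submodule.projectionOnto_apply_left hW ⟨y, hy⟩
    exact congrArg Subtype.val h
  have hQK : ∀ y ∈ K, Ql y = 0 := by
    intro y hy
    have h := Submodule.projectionOnto_apply_of_mem_right hW.symm hy
    exact congrArg Subtype.val h
  set Pc : (Fin d → ℝ) →L[ℝ] (Fin d → ℝ) := Pl.toContinuousLinearMap with hPc
  set Qc : (Fin d → ℝ) →L[ℝ] (Fin d → ℝ) := Ql.toContinuousLinearMap with hQc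
  -- strict derivative of f at (0,0)
  set B : (Fin d → ℝ) × ℝ →L[ℝ] (Fin d → ℝ) := fderiv ℝ f (0, 0) with hB
  have hfstrict : HasStrictFDerivAt f B (0, 0) := hF.hasStrictFDerivAt (by simp)
  have hBA : ∀ v : Fin d → ℝ, B (v, 0) = A v := by
    intro v
    have h1 : HasFDerivAt (fun y : Fin d → ℝ => (y, (0:ℝ)))
        (ContinuousLinearMap.inl ℝ (Fin d → ℝ) ℝ) 0 :=
      (ContinuousLinearMap.inl ℝ (Fin d → ℝ) ℝ).hasFDerivAt
    have h2 : HasFDerivAt f B ((0 : Fin d → ℝ), (0:ℝ)) := hfstrict.hasFDerivAt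
    have hcomp0 := h2.comp (0 : Fin d → ℝ) h1
    have hcomp : HasFDerivAt (fun y : Fin d → ℝ => F y 0)
        (B.comp (ContinuousLinearMap.inl ℝ (Fin d → ℝ) ℝ)) 0 := hcomp0
    have heq := hcomp.fderiv
    rw [← hA] at heq
    have : A v = (B.comp (ContinuousLinearMap.inl ℝ (Fin d → ℝ) ℝ)) v := by rw [heq]
    simpa using this.symm
  -- the linear map L and its invertibility
  set Lc : (Fin d → ℝ) × ℝ →L[ℝ] (Fin d → ℝ) × ℝ :=
    ((Pc.comp (ContinuousLinearMap.fst ℝ (Fin d → ℝ) ℝ)) + (Qc.comp B)).prod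
      (ContinuousLinearMap.snd ℝ (Fin d → ℝ) ℝ) with hLc
  have hLapp : ∀ p : (Fin d → ℝ) × ℝ, Lc p = (Pc p.1 + Qc (B p), p.2) := fun p => rfl
  have hLinj : Function.Injective (Lc : (Fin d → ℝ) × ℝ →ₗ[ℝ] (Fin d → ℝ) × ℝ) := by
    rw [← LinearMap.ker_eq_bot, Submodule.eq_bot_iff]
    rintro ⟨v, μ⟩ hz
    have hz' : (Pc v + Qc (B (v, μ)), μ) = (0, 0) := hz
    have h2 : μ = 0 := congrArg Prod.snd hz'
    subst h2
    have h1 : Pl v + Ql (A v) = 0 := by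
      have := congrArg Prod.fst hz'
      simpa [hBA v, hPc, hQc] using this
    have hboth : Pl v = 0 ∧ Ql (A v) = 0 := by
      have hmem1 : Pl v ∈ K := hPmem v
      have hmem2 : Ql (A v) ∈ W := hQmem (A v)
      have hPv : Pl v = -Ql (A v) := by linear_combination h1
      have : Pl v ∈ W := hPv ▸ W.neg_mem hmem2
      have hP0 : Pl v = 0 := (Submodule.disjoint_def.mp hW.disjoint) _ hmem1 this
      exact ⟨hP0, by linear_combination h1 - hP0⟩
    have hAvK : A v ∈ K := by
      have := hPQ (A v)
      rw [hboth.2, add_zero] at this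
      rw [← this]; exact hPmem (A v)
    have hvK : v ∈ K := hkey v hAvK
    have : v = 0 := by rw [← hPK v hvK, hboth.1]
    simp [this]
  have hLbij : Function.Bijective (Lc : (Fin d → ℝ) × ℝ →ₗ[ℝ] (Fin d → ℝ) × ℝ) :=
    ⟨hLinj, LinearMap.injective_iff_surjective.mp hLinj⟩
  set Leq : ((Fin d → ℝ) × ℝ) ≃L[ℝ] ((Fin d → ℝ) × ℝ) :=
    (LinearEquiv.ofBijective _ hLbij).toContinuousLinearEquiv with hLeq
  have hcoe : (Leq : (Fin d → ℝ) × ℝ →L[ℝ] (Fin d → ℝ) × ℝ) = Lc := by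
    ext p <;> rfl
  -- the map Φ
  set Φ : (Fin d → ℝ) × ℝ → (Fin d → ℝ) × ℝ := fun p => (Pc p.1 + Qc (f p), p.2) with hΦdef
  have hΦ : HasStrictFDerivAt Φ
      (Leq : (Fin d → ℝ) × ℝ →L[ℝ] (Fin d → ℝ) × ℝ) (0, 0) := by
    rw [hcoe]
    have h1 : HasStrictFDerivAt (fun p : (Fin d → ℝ) × ℝ => Pc p.1)
        (Pc.comp (ContinuousLinearMap.fst ℝ (Fin d → ℝ) ℝ)) (0, 0) :=
      (Pc.comp (ContinuousLinearMap.fst ℝ (Fin d → ℝ) ℝ)).hasStrictFDerivAt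
    have h2 : HasStrictFDerivAt (fun p : (Fin d → ℝ) × ℝ => Qc (f p))
        (Qc.comp B) (0, 0) := Qc.hasStrictFDerivAt.comp (0, 0) hfstrict
    have h3 : HasStrictFDerivAt (fun p : (Fin d → ℝ) × ℝ => p.2)
        (ContinuousLinearMap.snd ℝ (Fin d → ℝ) ℝ) (0, 0) :=
      (ContinuousLinearMap.snd ℝ (Fin d → ℝ) ℝ).hasStrictFDerivAt
    exact HasStrictFDerivAt.prodMk (h1.add h2) h3
  set e := hΦ.toOpenPartialHomeomorph Φ with he
  have hecoe : (e : (Fin d → ℝ) × ℝ → (Fin d → ℝ) × ℝ) = Φ :=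
    hΦ.toOpenPartialHomeomorph_coe
  have hes : e.source ∈ nhds ((0 : Fin d → ℝ), (0:ℝ)) :=
    e.open_source.mem_nhds hΦ.mem_toOpenPartialHomeomorph_source
  -- continuity of the two curves
  have hc1 : Filter.Tendsto (fun lam => (x lam, lam)) (nhdsWithin 0 D)
      (nhds ((0 : Fin d → ℝ), (0:ℝ))) := by
    have h := (hx 0 h0D).prodMk (continuousWithinAt_id (x := (0:ℝ)) (s := D))
    simpa [hx0] using h.tendsto
  have hc2 : Filter.Tendsto (fun lam => (Pc (x lam), lam)) (nhdsWithin 0 D)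
      (nhds ((0 : Fin d → ℝ), (0:ℝ))) := by
    have h := (Pc.continuous.continuousAt.comp_continuousWithinAt (hx 0 h0D)).prodMk
      (continuousWithinAt_id (x := (0:ℝ)) (s := D))
    simpa [Function.comp, hx0] using h.tendsto
  have t1 := hc1 hes
  have t2 := hc2 hes
  obtain ⟨U, hU, hUsub⟩ := mem_nhdsWithin_iff_exists_mem_nhds_inter.mp
    (Filter.inter_mem t1 t2)
  refine ⟨U, hU, fun lam hlam => ?_⟩
  obtain ⟨m1, m2⟩ := hUsub ⟨hlam.1, hlam.2⟩
  have hsol' : f (x lam, lam) = 0 := hsol lam hlam.2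
  have hΦ1 : Φ (x lam, lam) = (Pc (x lam), lam) := by
    simp [hΦdef, hsol']
  have hPxK : Pc (x lam) ∈ K := hPmem (x lam)
  have hFPK : F (Pc (x lam)) lam ∈ K := hinv lam _ hPxK
  have hΦ2 : Φ (Pc (x lam), lam) = (Pc (x lam), lam) := by
    have e1 : Pl (Pl (x lam)) = Pl (x lam) := hPK _ (hPmem (x lam))
    have e2 : Ql (F (Pl (x lam)) lam) = 0 := hQK _ hFPK
    simp only [hΦdef, hf]
    simp [hPc, hQc, e1, e2]
  have heq : (x lam, lam) = (Pc (x lam), lam) := by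
    apply e.injOn m1 m2
    rw [hecoe, hΦ1, hΦ2]
  have : x lam = Pc (x lam) := congrArg Prod.fst heq
  rw [this]
  exact hPxK
end

section
/- Let N be a feed-forward network with layers C₀, C₁, …, C_m and adjacency matrices A₁, …, A_k, and let f₀, …, f_k be reals with f₀ + Σ_{i=1}^k f_i = 0 and f₀ ≠ 0. Then the generalized kernel of J = f₀·Id + Σ_{i=1}^k f_i·A_i has dimension |C₀|. -/
/-!
A cell `c ∈ C₀` is fixed by every `σᵢ`, so `(J v) c = (f₀ + Σ fᵢ) v c = 0`: the range of `J`
lies in the kernel of the restriction `ℝ^C → ℝ^{C₀}`. On the other hand a vector in `ker J`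
that vanishes on `C₀` vanishes on every layer, by induction, because `(J v) c = f₀ v c` plus
values of `v` on the layer below and `f₀ ≠ 0`. Hence `ker J ∩ range J = 0`, so the
generalized kernel is `ker J`; the restriction is injective on `ker J`, and rank–nullity
forces it to be onto `ℝ^{C₀}`.
-/

open Module LinearMap Matrix

namespace Module.End

variable {K V : Type*} [Field K] [AddCommGroup V] [Module K V]

theorem maxGenEigenspace_zero_eq_ker_of_disjoint {f : End K V}
    (h : Disjoint (ker f) (range f)) : f.maxGenEigenspace (0 : K) = ker f := by
  have key : ∀ n (v : V), (f ^ n) v = 0 → f v = 0 := by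
    intro n
    induction n with
    | zero => intro v hv; simp_all
    | succ n ih =>
      intro v hv
      have hfv : f (f v) = 0 := ih (f v) (by rwa [← Module.End.mul_apply, ← pow_succ])
      exact Submodule.disjoint_def.1 h _ hfv (mem_range_self f v)
  ext v
  simp only [mem_maxGenEigenspace, zero_smul, sub_zero, mem_ker]
  exact ⟨fun ⟨n, hn⟩ => key n v hn, fun hv => ⟨1, by simpa using hv⟩⟩

end Module.End

namespace LinearMap

variable {K V U : Type*} [DivisionRing K] [AddCommGroup V] [Module K V] [AddCommGroup U]
  [Module K U] [FiniteDimensional K V]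

theorem finrank_ker_eq_of_range_le_ker {f : V →ₗ[K] V} {g : V →ₗ[K] U}
    (hg : Function.Surjective g) (hrange : range f ≤ ker g) (hker : Disjoint (ker f) (ker g)) :
    finrank K (ker f) = finrank K U := by
  have hinj : Function.Injective (g ∘ₗ (ker f).subtype) := by
    rw [← ker_eq_bot, ker_eq_bot']
    rintro ⟨v, hv⟩ hgv
    exact Subtype.ext (Submodule.disjoint_def.1 hker v hv hgv)
  have : Module.Finite K U := .of_surjective g hg
  have hf := finrank_range_add_finrank_ker f
  have hg' := finrank_range_add_finrank_ker g
  rw [range_eq_top.2 hg, finrank_top] at hg'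
  have := finrank_le_finrank_of_injective hinj
  have := Submodule.finrank_mono hrange
  omega

end LinearMap

section Network

variable {C K : Type*} [DecidableEq C]

def adjacencyMatrix (K : Type*) [Zero K] [One K] (σ : C → C) : Matrix C C K :=
  Matrix.of fun c c' => if c' = σ c then 1 else 0

theorem adjacencyMatrix_mulVec [Fintype C] [NonAssocSemiring K] (σ : C → C) (v : C → K) :
    adjacencyMatrix K σ *ᵥ v = v ∘ σ := by
  ext c
  simp [adjacencyMatrix, Matrix.mulVec, dotProduct]

variable [Semiring K] {k : ℕ} (σ : Fin k → C → C) (f0 : K) (f : Fin k → K)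

def networkMatrix : Matrix C C K :=
  f0 • 1 + ∑ i, f i • adjacencyMatrix K (σ i)

variable [Fintype C]

theorem networkMatrix_mulVec_apply (v : C → K) (c : C) :
    (networkMatrix σ f0 f *ᵥ v) c = f0 * v c + ∑ i, f i * v (σ i c) := by
  simp [networkMatrix, Matrix.add_mulVec, Matrix.sum_mulVec, Matrix.smul_mulVec,
    adjacencyMatrix_mulVec]

variable {σ f0 f}

theorem networkMatrix_mulVec_apply_eq_zero_of_fixed (hval : f0 + ∑ i, f i = 0) {c : C}
    (hc : ∀ i, σ i c = c) (v : C → K) : (networkMatrix σ f0 f *ᵥ v) c = 0 := by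
  simp only [networkMatrix_mulVec_apply, hc, ← Finset.sum_mul, ← add_mul, hval, zero_mul]

theorem eq_zero_of_networkMatrix_mulVec_eq_zero [NoZeroDivisors K] {layer : C → ℕ}
    (hdown : ∀ i c j, layer c = j + 1 → layer (σ i c) = j) (hf0 : f0 ≠ 0) {v : C → K}
    (hv : networkMatrix σ f0 f *ᵥ v = 0) (hv0 : ∀ c, layer c = 0 → v c = 0) : v = 0 := by
  suffices ∀ j c, layer c = j → v c = 0 from funext fun c => this _ c rfl
  intro j
  induction j with
  | zero => exact hv0
  | succ j ih =>
    intro c hc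
    have hJc := congrFun hv c
    simp only [networkMatrix_mulVec_apply, fun i => ih _ (hdown i c j hc), mul_zero,
      Finset.sum_const_zero, add_zero, Pi.zero_apply] at hJc
    exact (mul_eq_zero.1 hJc).resolve_left hf0

end Network

theorem stmt_11_general {C : Type*} [Fintype C] [DecidableEq C] {k : ℕ}
    (σ : Fin k → C → C)
    (layer : C → ℕ)
    (hfix : ∀ i c, layer c = 0 → σ i c = c)
    (hdown : ∀ i c j, layer c = j + 1 → layer (σ i c) = j)
    (f0 : ℝ) (f : Fin k → ℝ)
    (hval : f0 + ∑ i, f i = 0) (hf0 : f0 ≠ 0) :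
    Module.finrank ℝ
        (Module.End.maxGenEigenspace
          (Matrix.toLin'
            (f0 • (1 : Matrix C C ℝ) +
              ∑ i, f i • Matrix.of (fun c c' => if c' = σ i c then (1 : ℝ) else 0)))
          0) =
      (Finset.univ.filter (fun c => layer c = 0)).card := by
  let J := toLin' (networkMatrix σ f0 f)
  let restrict : (C → ℝ) →ₗ[ℝ] ({c // layer c = 0} → ℝ) := funLeft ℝ ℝ Subtype.val
  have hrange : range J ≤ ker restrict := by
    rintro _ ⟨v, rfl⟩
    exact funext fun c =>
      networkMatrix_mulVec_apply_eq_zero_of_fixed hval (fun i => hfix i c c.2) v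
  have hdisj : Disjoint (ker J) (ker restrict) :=
    Submodule.disjoint_def.2 fun v hJv hv => eq_zero_of_networkMatrix_mulVec_eq_zero hdown hf0
      hJv fun c hc => congrFun hv ⟨c, hc⟩
  change finrank ℝ (Module.End.maxGenEigenspace J 0) = _
  rw [Module.End.maxGenEigenspace_zero_eq_ker_of_disjoint (hdisj.mono_right hrange),
    finrank_ker_eq_of_range_le_ker
      (funLeft_surjective_of_injective ℝ ℝ _ Subtype.val_injective) hrange hdisj,
    finrank_fintype_fun_eq_card, Fintype.card_subtype]

/-- for a feed-forward network with first layer `C₀`, when the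
bifurcation condition is associated to the valency (`f₀ + Σ f_i = 0`, `f₀ ≠ 0`),
the generalized kernel of `J = f₀·Id + Σ f_i·A_i` has dimension `|C₀|`. -/
theorem stmt_11 {C : Type*} [Fintype C] [DecidableEq C] {k : ℕ}
    (σ : Fin k → C → C) (m : ℕ)
    (layer : C → ℕ) (hlayer : ∀ c, layer c ≤ m)
    (hsurj : ∀ j ≤ m, ∃ c, layer c = j)
    (hfix : ∀ i c, layer c = 0 → σ i c = c)
    (hdown : ∀ i c j, layer c = j + 1 → layer (σ i c) = j)
    (f0 : ℝ) (f : Fin k → ℝ)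
    (hval : f0 + ∑ i, f i = 0) (hf0 : f0 ≠ 0) :
    Module.finrank ℝ
        (Module.End.maxGenEigenspace
          (Matrix.toLin'
            (f0 • (1 : Matrix C C ℝ) +
              ∑ i, f i • Matrix.of (fun c c' => if c' = σ i c then (1 : ℝ) else 0)))
          0) =
      (Finset.univ.filter (fun c => layer c = 0)).card :=
  stmt_11_general σ layer hfix hdown f0 f hval hf0
end

section
/- Let C be a finite set and σ₁,…,σ_k : C → C. An equivalence relation ⋈ on C is balanced (for all i, c ⋈ d implies σ_i(c) ⋈ σ_i(d)) if and only if for every function f : ℝ × ℝ^k → ℝ the polydiagonal subspace Δ_⋈ = {x ∈ ℝ^C : c ⋈ d → x_c = x_d} is invariant under the admissible map f^N defined by (f^N(x))_c = f(x_c, x_{σ₁(c)}, …, x_{σ_k(c)}). -/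
/-!
Balanced relations make `f^N` respect `Δ_⋈` by congruence. Conversely, take `f` to be the projection
onto the `i`-th coupling coordinate: invariance then says that every `x ∈ Δ_⋈` takes equal values
at `σ_i(c)` and `σ_i(d)`, and the indicator of the class of `σ_i(c)` turns this into `σ_i(c) ⋈ σ_i(d)`.
-/

open Classical in
theorem Equivalence.rel_of_forall_eq {α : Type*} {r : α → α → Prop} (hr : Equivalence r)
    {a b : α} (h : ∀ x : α → ℝ, (∀ c d, r c d → x c = x d) → x a = x b) : r a b := by
  have hclass : ∀ c d, r c d → (if r a c then (1 : ℝ) else 0) = if r a d then 1 else 0 :=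
    fun c d hcd => by
      rw [propext ⟨fun hac => hr.trans hac hcd, fun had => hr.trans had (hr.symm hcd)⟩]
  by_contra hab
  simpa [hr.refl a, hab] using h _ hclass

theorem stmt_13_general {C : Type*} {k : ℕ}
    (σ : Fin k → C → C)
    (r : C → C → Prop) (hr : Equivalence r) :
    (∀ i c d, r c d → r (σ i c) (σ i d)) ↔
      (∀ f : ℝ → (Fin k → ℝ) → ℝ, ∀ x : C → ℝ,
        (∀ c d, r c d → x c = x d) →
        ∀ c d, r c d →
          f (x c) (fun i => x (σ i c)) = f (x d) (fun i => x (σ i d))) := by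
  constructor
  · intro hbal f x hx c d hcd
    exact congrArg₂ f (hx c d hcd) (funext fun i => hx _ _ (hbal i c d hcd))
  · intro hinv i c d hcd
    exact hr.rel_of_forall_eq fun x hx => hinv (fun _ v => v i) x hx c d hcd

/-- an equivalence relation `r` on the cells is balanced if and
only if the polydiagonal `Δ_r` is invariant under every admissible map of the
network. -/
theorem stmt_13 {C : Type*} [Fintype C] [DecidableEq C] {k : ℕ}
    (σ : Fin k → C → C)
    (r : C → C → Prop) (hr : Equivalence r) :
    (∀ i c d, r c d → r (σ i c) (σ i d)) ↔
      (∀ f : ℝ → (Fin k → ℝ) → ℝ, ∀ x : C → ℝ,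
        (∀ c d, r c d → x c = x d) →
        ∀ c d, r c d →
          f (x c) (fun i => x (σ i c)) = f (x d) (fun i => x (σ i d))) :=
  stmt_13_general σ r hr
end

section
/- Let C be a finite set, σ₁,…,σ_k : C → C defining a feed-forward network with layers C₀, …, C_m, and let f : ℝ^{k+1} × ℝ → ℝ be smooth with f(0,…,0,λ) = 0 for all λ and with f₀ + f₁ + … + f_k ≠ 0, where f_i denotes ∂f/∂x_i at the origin. Then there exist λ₀ > 0 and a neighborhood V of 0 in ℝ such that for all λ ∈ ]−λ₀, λ₀[ and any equilibrium branch b with values in V^C (i.e., f(b_c(λ), b_{σ₁(c)}(λ), …, b_{σ_k(c)}(λ), λ) = 0 for all cells c), the coordinates of b on the first layer vanish: b_c(λ) = 0 for all c ∈ C₀. -/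
/-- under the condition `f₀ + f₁ + … + f_k ≠ 0` (nonzero valency
eigenvalue derivative), equilibrium branches of a feed-forward system near the
origin vanish on the first layer. -/
theorem stmt_15 {C : Type*} [Fintype C] {k : ℕ} (σ : Fin k → C → C)
    (m : ℕ) (layer : C → ℕ) (hlayer : ∀ c, layer c ≤ m)
    (hfix : ∀ i c, layer c = 0 → σ i c = c)
    (hdown : ∀ i c j, layer c = j + 1 → layer (σ i c) = j)
    (f : ℝ → (Fin k → ℝ) → ℝ → ℝ)
    (hsm : ContDiff ℝ (⊤ : ℕ∞) (fun p : ℝ × (Fin k → ℝ) × ℝ => f p.1 p.2.1 p.2.2))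
    (htriv : ∀ lam : ℝ, f 0 0 lam = 0)
    (hval : deriv (fun x => f x (fun _ => x) 0) 0 ≠ 0) :
    ∃ lam0 > (0 : ℝ), ∃ V ∈ nhds (0 : ℝ),
      ∀ (b : C → ℝ → ℝ) (lam : ℝ), lam ∈ Set.Ioo (-lam0) lam0 →
        (∀ c, b c lam ∈ V) →
        (∀ c, f (b c lam) (fun i => b (σ i c) lam) lam = 0) →
        ∀ c, layer c = 0 → b c lam = 0 := by
  -- the reduced map on the diagonal
  set F : ℝ × ℝ → ℝ := fun p => f p.1 (fun _ => p.1) p.2 with hFdef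
  have hL : ContDiff ℝ (⊤ : ℕ∞) (fun p : ℝ × ℝ => ((p.1, (fun _ => p.1 : Fin k → ℝ), p.2) :
      ℝ × (Fin k → ℝ) × ℝ)) := by
    apply ContDiff.prodMk contDiff_fst
    exact ContDiff.prodMk (contDiff_pi.2 fun _ => contDiff_fst) contDiff_snd
  have hF : ContDiff ℝ (⊤ : ℕ∞) F := hsm.comp hL
  -- partial derivative in the first variable
  set D : ℝ × ℝ → ℝ := fun p => fderiv ℝ F p (1, 0) with hDdef
  have hDcont : Continuous D :=
    (hF.continuous_fderiv (by simp)).clm_apply continuous_const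
  have hderiv : ∀ (x lam : ℝ), HasDerivAt (fun y => F (y, lam)) (D (x, lam)) x := by
    intro x lam
    have h1 : HasDerivAt (fun y : ℝ => ((y, lam) : ℝ × ℝ)) ((1 : ℝ), (0 : ℝ)) x :=
      HasDerivAt.prodMk (hasDerivAt_id x) (hasDerivAt_const x lam)
    exact (hF.differentiable (by simp) (x, lam)).hasFDerivAt.comp_hasDerivAt x h1
  have hD0 : D (0, 0) ≠ 0 := by
    have := (hderiv 0 0).deriv
    rw [← this]
    exact hval
  -- open set where D ≠ 0
  have hU : IsOpen {p : ℝ × ℝ | D p ≠ 0} := isOpen_compl_iff.2 (isClosed_singleton.preimage hDcont)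
  obtain ⟨ε, hε, hball⟩ := Metric.isOpen_iff.1 hU (0, 0) hD0
  refine ⟨ε, hε, Set.Ioo (-ε) ε, Ioo_mem_nhds (by linarith) hε, ?_⟩
  intro b lam hlam hV heq c hc
  set x := b c lam with hxdef
  have hx : x ∈ Set.Ioo (-ε) ε := hV c
  have hFx : F (x, lam) = 0 := by
    have := heq c
    simp only [hFdef]
    have hσ : (fun i => b (σ i c) lam) = fun _ : Fin k => x := by
      funext i; rw [hfix i c hc]
    rw [← hσ]
    exact this
  have hF0 : F (0, lam) = 0 := htriv lam
  have hDne : ∀ y : ℝ, y ∈ Set.Ioo (-ε) ε → D (y, lam) ≠ 0 := by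
    intro y hy
    apply hball
    rw [Metric.mem_ball, Prod.dist_eq]
    simp only [Real.dist_eq, sub_zero]
    apply max_lt
    · exact abs_lt.2 ⟨hy.1, hy.2⟩
    · exact abs_lt.2 ⟨hlam.1, hlam.2⟩
  by_contra hne
  have hcont : Continuous (fun y => F (y, lam)) :=
    hF.continuous.comp (continuous_id.prodMk continuous_const)
  rcases lt_or_gt_of_ne hne with hlt | hgt
  · obtain ⟨y, hy, hdy⟩ := exists_deriv_eq_zero hlt hcont.continuousOn (hFx.trans hF0.symm)
    have : deriv (fun y => F (y, lam)) y = D (y, lam) := (hderiv y lam).deriv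
    rw [this] at hdy
    exact hDne y ⟨lt_trans hx.1 hy.1, lt_trans hy.2 hε⟩ hdy
  · obtain ⟨y, hy, hdy⟩ := exists_deriv_eq_zero hgt hcont.continuousOn (hF0.trans hFx.symm)
    have : deriv (fun y => F (y, lam)) y = D (y, lam) := (hderiv y lam).deriv
    rw [this] at hdy
    exact hDne y ⟨lt_trans (by linarith) hy.1, lt_trans hy.2 hx.2⟩ hdy
end

section
/- Let N be a feed-forward network with layers C₀, …, C_m, let L (with functions σ^L_i and layers C'₀, …, C'_m) be a feed-forward lift of N obtained by splitting a cell c ∈ C_j (0 < j < m) into two cells c₁, c₂ of L, where |C_{j+1}| = 1, say C_{j+1} = {d}, and let ⋈ be the balanced relation on L given by c₁ ⋈ c₂. Then ⋈ is the unique balanced equivalence relation on L whose quotient equals N. -/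
/-!
Let `ρ` be any surjective morphism onto `N` whose kernel is the given balanced relation. A
morphism of feed-forward networks can only lower layers, and since `L` and `N` have equally
many top-layer cells, a count shows that `ρ` maps the top layer onto itself; descending along
sources, `ρ` preserves every layer. The cells of `L` in layer `j` are images of the unique cell
of layer `j + 1`, which both `ρ` and the split projection `π` send to `d`, so `ρ` and `π` agree
on layer `j`; in particular `ρ` identifies `c₁` and `c₂`. Thus `ρ` factors through `π` by a
surjective, hence bijective, self-map of the finite set of cells of `N`.
-/

open Function Finset

theorem Function.FactorsThrough.apply_eq_apply_iff {α β : Type*} [Finite β] {π ρ : α → β}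
    (h : ρ.FactorsThrough π) (hρ : Surjective ρ) (a b : α) : ρ a = ρ b ↔ π a = π b := by
  have hg : ∀ a, extend π ρ id (π a) = ρ a := h.extend_apply id
  have hinj : Injective (extend π ρ id) := Finite.injective_iff_surjective.mpr fun y => by
    obtain ⟨a, rfl⟩ := hρ y
    exact ⟨π a, hg a⟩
  rw [← hg, ← hg, hinj.eq_iff]

section Layers

variable {α β : Type*} {k : ℕ} {σ : Fin k → α → α} {τ : Fin k → β → β}
  {layα : α → ℕ} {layβ : β → ℕ} {ρ : α → β} {m : ℕ}

theorem layer_apply_le_of_semiconj {f : α → α} {g : β → β}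
    (hf0 : ∀ a, layα a = 0 → f a = a) (hf : ∀ a n, layα a = n + 1 → layα (f a) = n)
    (hg : ∀ b n, layβ b = n + 1 → layβ (g b) = n) (hρ : Semiconj ρ f g) (a : α) :
    layβ (ρ a) ≤ layα a := by
  induction h : layα a generalizing a with
  | zero =>
    have hfix : g (ρ a) = ρ a := by rw [← hρ, hf0 a h]
    rcases hb : layβ (ρ a) with _ | n
    · rfl
    · have hgb := hg _ n hb
      rw [hfix] at hgb
      omega
  | succ n ih =>
    have hfa := ih (f a) (hf a n h)
    rw [hρ] at hfa
    rcases hb : layβ (ρ a) with _ | t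
    · omega
    · have hgb := hg _ t hb
      omega

theorem layer_apply_eq_top_of_card_le [Fintype α] [Fintype β] (hρ : Surjective ρ)
    (hle : ∀ a, layβ (ρ a) ≤ layα a) (htop : ∀ a, layα a ≤ m)
    (hcard : #{a | layα a = m} ≤ #{b | layβ b = m}) (a : α) (ha : layα a = m) :
    layβ (ρ a) = m := by
  set P : Finset α := univ.filter fun a => layβ (ρ a) = m
  have hPS : P ⊆ ({a | layα a = m} : Finset α) := by
    intro a
    simp only [P, mem_filter, mem_univ, true_and]
    have := hle a
    have := htop a
    omega
  have hsurj : #{b | layβ b = m} ≤ #P :=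
    card_le_card_of_surjOn ρ fun b hb => by
      obtain ⟨a, rfl⟩ := hρ b
      exact ⟨a, by simpa [P] using hb, rfl⟩
  have hmem : a ∈ ({a | layα a = m} : Finset α) := by simpa using ha
  rw [← eq_of_subset_of_card_le hPS (hcard.trans hsurj)] at hmem
  simpa [P] using hmem

theorem layer_apply_eq_of_top
    (hsource : ∀ a, layα a < m → ∃ a' i, layα a' = layα a + 1 ∧ σ i a' = a)
    (hτ : ∀ i b n, layβ b = n + 1 → layβ (τ i b) = n) (hρ : ∀ i, Semiconj ρ (σ i) (τ i))
    (htop : ∀ a, layα a ≤ m) (hρtop : ∀ a, layα a = m → layβ (ρ a) = m) (a : α) :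
    layβ (ρ a) = layα a := by
  induction h : m - layα a generalizing a with
  | zero =>
    have := htop a
    rw [hρtop a (by omega)]
    omega
  | succ n ih =>
    obtain ⟨a', i, ha', rfl⟩ := hsource a (by omega)
    rw [hρ i a']
    exact hτ i _ _ (by rw [ih a' (by omega), ha'])

theorem layer_apply_eq_of_card_top_le [Fintype α] [Fintype β] [Nonempty (Fin k)]
    (hσ0 : ∀ i a, layα a = 0 → σ i a = a) (hσ : ∀ i a n, layα a = n + 1 → layα (σ i a) = n)
    (hsource : ∀ a, layα a < m → ∃ a' i, layα a' = layα a + 1 ∧ σ i a' = a)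
    (htop : ∀ a, layα a ≤ m) (hτ : ∀ i b n, layβ b = n + 1 → layβ (τ i b) = n)
    (hρ : ∀ i, Semiconj ρ (σ i) (τ i)) (hsurj : Surjective ρ)
    (hcard : #{a | layα a = m} ≤ #{b | layβ b = m}) (a : α) :
    layβ (ρ a) = layα a := by
  obtain ⟨i⟩ := ‹Nonempty (Fin k)›
  have hle := layer_apply_le_of_semiconj (hσ0 i) (hσ i) (hτ i) (hρ i)
  exact layer_apply_eq_of_top hsource hτ hρ htop
    (layer_apply_eq_top_of_card_le hsurj hle htop hcard) a

theorem apply_eq_apply_of_layer_succ_eq {π : α → β} {j : ℕ} {d : β}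
    (hsource : ∀ a, layα a < m → ∃ a' i, layα a' = layα a + 1 ∧ σ i a' = a)
    (hρ : ∀ i, Semiconj ρ (σ i) (τ i)) (hπ : ∀ i, Semiconj π (σ i) (τ i))
    (hρlay : ∀ a, layβ (ρ a) = layα a) (hπlay : ∀ a, layβ (π a) = layα a)
    (hd : ∀ b, layβ b = j + 1 → b = d) (hjm : j < m) (a : α) (ha : layα a = j) :
    ρ a = π a := by
  obtain ⟨a', i, ha', rfl⟩ := hsource a (by omega)
  rw [hρ, hπ, hd (ρ a') (by rw [hρlay]; omega), hd (π a') (by rw [hπlay]; omega)]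

end Layers

theorem stmt_19_general {CL CN : Type*} [Fintype CL] [Fintype CN] {k : ℕ}
    (σL : Fin k → CL → CL) (σN : Fin k → CN → CN)
    (m : ℕ) (layL : CL → ℕ) (layN : CN → ℕ)
    (hlayL : ∀ a, layL a ≤ m)
    (hfixL : ∀ i a, layL a = 0 → σL i a = a)
    (hdownL : ∀ i a j, layL a = j + 1 → layL (σL i a) = j)
    (hsourceL : ∀ a, layL a < m → ∃ a' i, layL a' = layL a + 1 ∧ σL i a' = a)
    (hdownN : ∀ i a j, layN a = j + 1 → layN (σN i a) = j)
    (π : CL → CN)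
    (hπcomm : ∀ i a, π (σL i a) = σN i (π a))
    (hπlay : ∀ a, layN (π a) = layL a)
    (c : CN) (c1 c2 : CL)
    (hc1 : π c1 = c) (hc2 : π c2 = c)
    (hsplit : ∀ a b : CL, π a = π b → a ≠ b →
      (a = c1 ∧ b = c2) ∨ (a = c2 ∧ b = c1))
    (j : ℕ) (hjm : j < m) (hcj : layN c = j)
    (d : CN) (hduniq : ∀ d', layN d' = j + 1 → d' = d) :
    ∀ r' : CL → CL → Prop, Equivalence r' →
      (∀ i a b, r' a b → r' (σL i a) (σL i b)) →
      (∃ ρ : CL → CN, Function.Surjective ρ ∧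
        (∀ a b, r' a b ↔ ρ a = ρ b) ∧
        ∀ i a, ρ (σL i a) = σN i (ρ a)) →
      ∀ a b, r' a b ↔ π a = π b := by
  rintro r' - - ⟨ρ, hρsurj, hker, hρcomm⟩
  have hc1j : layL c1 = j := by rw [← hπlay, hc1, hcj]
  have hc2j : layL c2 = j := by rw [← hπlay, hc2, hcj]
  have hπinj : ∀ a b, π a = π b → layL a ≠ j → a = b := by
    intro a b hab ha
    by_contra hne
    rcases hsplit a b hab hne with ⟨rfl, -⟩ | ⟨rfl, -⟩ <;> contradiction
  have hcard : #{a | layL a = m} ≤ #{b | layN b = m} :=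
    card_le_card_of_injOn π (fun a ha => by simpa [hπlay] using ha)
      fun a ha b _ hab => hπinj a b hab (by have := (mem_filter.mp ha).2; omega)
  obtain ⟨-, i, -, -⟩ := hsourceL c1 (by omega)
  have : Nonempty (Fin k) := ⟨i⟩
  have hρlay : ∀ a, layN (ρ a) = layL a :=
    layer_apply_eq_of_card_top_le hfixL hdownL hsourceL hlayL hdownN hρcomm hρsurj hcard
  have hagree := apply_eq_apply_of_layer_succ_eq hsourceL hρcomm hπcomm hρlay hπlay hduniq hjm
  have hρc : ρ c1 = ρ c2 := by rw [hagree c1 hc1j, hagree c2 hc2j, hc1, hc2]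
  have hfactors : ρ.FactorsThrough π := by
    intro a b hab
    by_cases hne : a = b
    · rw [hne]
    rcases hsplit a b hab hne with ⟨rfl, rfl⟩ | ⟨rfl, rfl⟩
    · exact hρc
    · exact hρc.symm
  intro a b
  rw [hker, hfactors.apply_eq_apply_iff hρsurj]

/-- if the feed-forward lift `L` of `N` is the split of a cell
`c` of an intermediate layer `C_j` (`0 < j < m`) into two cells `c₁, c₂`, and
the next layer `C_{j+1}` of `N` is a singleton `{d}`, then the balanced
equivalence relation identifying exactly `c₁` and `c₂` (i.e. the kernel of the
split projection `π`) is the unique balanced equivalence relation on `L` whose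
quotient network is `N`. -/
theorem stmt_19 {CL CN : Type*} [Fintype CL] [Fintype CN] {k : ℕ}
    (σL : Fin k → CL → CL) (σN : Fin k → CN → CN)
    (m : ℕ) (layL : CL → ℕ) (layN : CN → ℕ)
    (hlayL : ∀ a, layL a ≤ m) (hlayN : ∀ a, layN a ≤ m)
    (hsurjL : ∀ j ≤ m, ∃ a, layL a = j) (hsurjN : ∀ j ≤ m, ∃ a, layN a = j)
    (hfixL : ∀ i a, layL a = 0 → σL i a = a)
    (hdownL : ∀ i a j, layL a = j + 1 → layL (σL i a) = j)
    (hsourceL : ∀ a, layL a < m → ∃ a' i, layL a' = layL a + 1 ∧ σL i a' = a)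
    (hfixN : ∀ i a, layN a = 0 → σN i a = a)
    (hdownN : ∀ i a j, layN a = j + 1 → layN (σN i a) = j)
    (hsourceN : ∀ a, layN a < m → ∃ a' i, layN a' = layN a + 1 ∧ σN i a' = a)
    (π : CL → CN) (hπsurj : Function.Surjective π)
    (hπcomm : ∀ i a, π (σL i a) = σN i (π a))
    (hπlay : ∀ a, layN (π a) = layL a)
    (c : CN) (c1 c2 : CL) (hne : c1 ≠ c2)
    (hc1 : π c1 = c) (hc2 : π c2 = c)
    (hsplit : ∀ a b : CL, π a = π b → a ≠ b →
      (a = c1 ∧ b = c2) ∨ (a = c2 ∧ b = c1))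
    (j : ℕ) (hj0 : 0 < j) (hjm : j < m) (hcj : layN c = j)
    (d : CN) (hd : layN d = j + 1) (hduniq : ∀ d', layN d' = j + 1 → d' = d) :
    ∀ r' : CL → CL → Prop, Equivalence r' →
      (∀ i a b, r' a b → r' (σL i a) (σL i b)) →
      (∃ ρ : CL → CN, Function.Surjective ρ ∧
        (∀ a b, r' a b ↔ ρ a = ρ b) ∧
        ∀ i a, ρ (σL i a) = σN i (ρ a)) →
      ∀ a b, r' a b ↔ π a = π b :=
  stmt_19_general σL σN m layL layN hlayL hfixL hdownL hsourceL hdownN π hπcomm hπlay c c1 c2 hc1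
    hc2 hsplit j hjm hcj d hduniq
end
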